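/- There exists at least one group of positive definite n×n matrices P_1, …, P_N solving the harmonic-coupled Riccati equations P_i = A (∑_{j=1}^N l_{ij} P_j^{-1} + l_{ij} C_jᵀ R_j^{-1} C_j)^{-1} Aᵀ + Q for all i ∈ {1, …, N}. -/

import Mathlib

/-!
Iterate the Riccati map `F` from `P₀ = Q`. On positive definite tuples `F` is monotone in the
Loewner order and `Q ≤ F P`, so the iterates `Pₜ` increase. For an upper bound pass to
information matrices: with `Gₜ,ᵢ = ∑ⱼ lᵢⱼ (Pₜ,ⱼ⁻¹ + Sⱼ)` one has `Q ≤ c • A Gₜ,ᵢ⁻¹ Aᵀ` for a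
constant `c` independent of `t`, hence `Pₜ₊₁,ᵢ⁻¹ ≥ γ • A⁻ᵀ Gₜ,ᵢ A⁻¹` with `γ = (1 + c)⁻¹`.
Iterating this bound `k + n` times, where `L ^ w > 0` for all `w ≥ k`, every node collects the
measurement information `(A⁻ʷ)ᵀ Sᵣ A⁻ʷ` of every sensor `r` over `n` consecutive times, which
is positive definite by observability. So the increasing sequence is bounded, it converges
(its quadratic forms do, and polarization recovers the entries), and by continuity of `F` at
positive definite tuples the limit is a positive definite fixed point.
-/

open Matrix Filter Topology
open scoped MatrixOrder

namespace Matrix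

variable {d : Type*} {X Y M : Matrix d d ℝ}

lemma PosDef.of_le (hX : X.PosDef) (h : X ≤ Y) : Y.PosDef := by
  simpa using hX.add_posSemidef h

variable [Fintype d]

lemma mul_mul_transpose_le_mul_mul_transpose (h : X ≤ Y) (B : Matrix d d ℝ) :
    B * X * Bᵀ ≤ B * Y * Bᵀ := by
  simpa [star_eq_conjTranspose] using star_right_conjugate_le_conjugate h B

lemma transpose_mul_mul_le_transpose_mul_mul (h : X ≤ Y) (B : Matrix d d ℝ) :
    Bᵀ * X * B ≤ Bᵀ * Y * B := by
  simpa [star_eq_conjTranspose] using star_left_conjugate_le_conjugate h B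

lemma dotProduct_transpose_mul_mul_mulVec {e : Type*} [Fintype e] (B : Matrix e d ℝ)
    (M : Matrix e e ℝ) (x : d → ℝ) :
    x ⬝ᵥ (Bᵀ * M * B) *ᵥ x = (B *ᵥ x) ⬝ᵥ M *ᵥ (B *ᵥ x) := by
  rw [← mulVec_mulVec, ← mulVec_mulVec, dotProduct_mulVec, vecMul_transpose]

lemma dotProduct_mulVec_le_of_le (h : X ≤ Y) (x : d → ℝ) : x ⬝ᵥ X *ᵥ x ≤ x ⬝ᵥ Y *ᵥ x := by
  have := (le_iff.1 h).dotProduct_mulVec_nonneg x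
  rw [sub_mulVec, dotProduct_sub, star_trivial] at this
  linarith

lemma isClosed_setOf_posSemidef : IsClosed {X : Matrix d d ℝ | X.PosSemidef} := by
  have : {X : Matrix d d ℝ | X.PosSemidef} =
      {X | Xᴴ = X} ∩ ⋂ x : d → ℝ, {X | 0 ≤ star x ⬝ᵥ X *ᵥ x} := by
    ext X
    simp [posSemidef_iff_dotProduct_mulVec, IsHermitian]
  rw [this]
  exact (isClosed_eq continuous_id.matrix_conjTranspose continuous_id).inter <|
    isClosed_iInter fun x => isClosed_le continuous_const <|
      continuous_const.dotProduct (continuous_id.matrix_mulVec continuous_const)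

instance : OrderClosedTopology (Matrix d d ℝ) where
  isClosed_le' := isClosed_setOf_posSemidef.preimage (continuous_snd.sub continuous_fst)

variable [DecidableEq d]

lemma PosDef.isUnit_det (hX : X.PosDef) : IsUnit X.det :=
  (isUnit_iff_isUnit_det X).1 hX.isUnit

lemma PosDef.mul_mul_transpose_of_isUnit (hX : X.PosDef) {A : Matrix d d ℝ} (hA : IsUnit A.det) :
    (A * X * Aᵀ).PosDef := by
  simpa [star_eq_conjTranspose] using
    ((isUnit_iff_isUnit_det A).2 hA).posDef_star_right_conjugate_iff.2 hX

lemma PosDef.inv_anti (hX : X.PosDef) (h : X ≤ Y) : Y⁻¹ ≤ X⁻¹ := by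
  have hY := hX.of_le h
  have := hY.isUnit.invertible
  have := hX.inv.isUnit.invertible
  -- the Schur complements of `fromBlocks Y 1 1 X⁻¹` in its two corners are `Y - X` and `X⁻¹ - Y⁻¹`
  have hblock : (fromBlocks Y 1 (1 : Matrix d d ℝ)ᴴ X⁻¹).PosSemidef := by
    rw [PosDef.fromBlocks₂₂ _ _ hX.inv, nonsing_inv_nonsing_inv _ hX.isUnit_det]
    simpa [le_iff] using h
  rw [PosDef.fromBlocks₁₁ _ _ hY] at hblock
  simpa [le_iff] using hblock

lemma IsHermitian.exists_le_smul_one (hX : X.IsHermitian) :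
    ∃ c : ℝ, 0 < c ∧ X ≤ c • (1 : Matrix d d ℝ) := by
  obtain ⟨c, hc⟩ := (finite_real_spectrum (A := X)).bddAbove
  refine ⟨max c 1, by positivity, ?_⟩
  rw [← Algebra.algebraMap_eq_smul_one]
  exact le_algebraMap_of_spectrum_le (fun x hx => (hc hx).trans (le_max_left c 1))
    hX.isSelfAdjoint

lemma PosDef.exists_smul_one_le (hX : X.PosDef) :
    ∃ ε : ℝ, 0 < ε ∧ ε • (1 : Matrix d d ℝ) ≤ X := by
  obtain ⟨c, hc, hle⟩ := hX.inv.isHermitian.exists_le_smul_one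
  have hcX := hX.inv.inv_anti hle
  rw [nonsing_inv_nonsing_inv _ hX.isUnit_det] at hcX
  refine ⟨c⁻¹, by positivity, le_of_eq_of_le ?_ hcX⟩
  exact (inv_eq_left_inv (by simp [smul_smul, hc.ne'])).symm

lemma PosDef.exists_le_smul (hM : M.PosDef) (hX : X.IsHermitian) :
    ∃ c : ℝ, 0 < c ∧ X ≤ c • M := by
  obtain ⟨b, hb, hXb⟩ := hX.exists_le_smul_one
  obtain ⟨ε, hε, hεM⟩ := hM.exists_smul_one_le
  refine ⟨b / ε, by positivity, hXb.trans ?_⟩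
  calc b • (1 : Matrix d d ℝ) = (b / ε) • ε • 1 := by rw [smul_smul, div_mul_cancel₀ _ hε.ne']
    _ ≤ (b / ε) • M := smul_le_smul_of_nonneg_left hεM (by positivity)

lemma exists_forall_le_smul {ι : Type*} [Fintype ι] {M : ι → Matrix d d ℝ}
    (hM : ∀ i, (M i).PosDef) (hX : X.IsHermitian) : ∃ c : ℝ, 0 < c ∧ ∀ i, X ≤ c • M i := by
  choose c hc hle using fun i => (hM i).exists_le_smul hX
  have hsum : 0 ≤ ∑ i, c i := Finset.sum_nonneg fun i _ => (hc i).le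
  refine ⟨1 + ∑ i, c i, by positivity, fun i => (hle i).trans ?_⟩
  have hci : c i ≤ 1 + ∑ i, c i := by
    linarith [Finset.single_le_sum (fun j _ => (hc j).le) (Finset.mem_univ i)]
  exact smul_le_smul_of_nonneg_right hci (hM i).posSemidef.nonneg

lemma inv_smul_inv_le_inv_add {c : ℝ} (hc : 0 ≤ c) (hX : X.PosDef) (hY : Y.PosSemidef)
    (h : Y ≤ c • X) : (1 + c)⁻¹ • X⁻¹ ≤ (X + Y)⁻¹ := by
  have hle : X + Y ≤ (1 + c) • X := by
    rw [add_smul, one_smul]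
    exact add_le_add_right h X
  have hinv := (hX.add_posSemidef hY).inv_anti hle
  have h1c : (1 + c) ≠ 0 := by positivity
  rwa [inv_eq_left_inv (B := (1 + c)⁻¹ • X⁻¹) (by
    simp [smul_smul, h1c, nonsing_inv_mul _ hX.isUnit_det])] at hinv

lemma PosDef.continuousAt_inv (hX : X.PosDef) : ContinuousAt Inv.inv X :=
  continuousAt_matrix_inv X <| by
    simpa [Ring.inverse_eq_inv'] using continuousAt_inv₀ hX.det_pos.ne'

lemma exists_tendsto_of_isHermitian {α : Type*} {l : Filter α} {f : α → Matrix d d ℝ}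
    (hf : ∀ t, (f t).IsHermitian)
    (hq : ∀ x : d → ℝ, ∃ q, Tendsto (fun t => x ⬝ᵥ f t *ᵥ x) l (𝓝 q)) :
    ∃ P, Tendsto f l (𝓝 P) := by
  choose q hq using hq
  let e : d → d → ℝ := fun a => Pi.single a 1
  -- polarization recovers the entries of a symmetric matrix from its quadratic form
  have hpol : ∀ t a b, f t a b =
      ((e a + e b) ⬝ᵥ f t *ᵥ (e a + e b) - e a ⬝ᵥ f t *ᵥ e a - e b ⬝ᵥ f t *ᵥ e b) / 2 := by
    intro t a b
    have hab : f t b a = f t a b := by simpa using congrFun₂ (hf t).eq a b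
    simp only [e, mulVec_add, dotProduct_add, add_dotProduct, mulVec_single, single_dotProduct]
    simp [hab]
    ring
  refine ⟨of fun a b => (q (e a + e b) - q (e a) - q (e b)) / 2, tendsto_pi_nhds.2 fun a =>
    tendsto_pi_nhds.2 fun b => ?_⟩
  simp_rw [hpol]
  exact (((hq _).sub (hq _)).sub (hq _)).div_const 2

lemma exists_tendsto_of_monotone {f : ℕ → Matrix d d ℝ} (hf : Monotone f)
    (hB : BddAbove (Set.range f)) : ∃ P, Tendsto f atTop (𝓝 P) := by
  obtain ⟨B, hB⟩ := hB
  have hfB : ∀ t, f t ≤ B := fun t => hB ⟨t, rfl⟩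
  -- the increments `f t - f 0` are positive semidefinite, hence symmetric
  obtain ⟨P, hP⟩ := exists_tendsto_of_isHermitian (f := fun t => f t - f 0) (l := atTop)
    (fun t => (le_iff.1 (hf (Nat.zero_le t))).isHermitian) fun x =>
      ⟨_, tendsto_atTop_ciSup (fun s t hst => dotProduct_mulVec_le_of_le
          (sub_le_sub_right (hf hst) _) x)
        ⟨x ⬝ᵥ (B - f 0) *ᵥ x, by
          rintro _ ⟨t, rfl⟩
          exact dotProduct_mulVec_le_of_le (sub_le_sub_right (hfB t) _) x⟩⟩
  exact ⟨P + f 0, by simpa using hP.add_const (f 0)⟩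

lemma exists_mulVec_ne_zero_of_posDef_gramian {κ : Type*} [Fintype κ] {m : κ → Type*}
    [∀ i, Fintype (m i)] {A : Matrix d d ℝ} {C : ∀ i, Matrix (m i) d ℝ} {n : ℕ}
    (hObs : (∑ k ∈ Finset.range n, (A ^ k)ᵀ * (∑ i, (C i)ᵀ * C i) * A ^ k).PosDef)
    {y : d → ℝ} (hy : y ≠ 0) : ∃ p < n, ∃ i, C i *ᵥ (A ^ p *ᵥ y) ≠ 0 := by
  by_contra! h
  have hpos := hObs.dotProduct_mulVec_pos hy
  rw [star_trivial, sum_mulVec, dotProduct_sum, Finset.sum_eq_zero fun p hp => ?_] at hpos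
  · exact lt_irrefl 0 hpos
  rw [dotProduct_transpose_mul_mul_mulVec, sum_mulVec, dotProduct_sum]
  refine Finset.sum_eq_zero fun i _ => ?_
  rw [← mulVec_mulVec, dotProduct_mulVec, vecMul_transpose, h p (Finset.mem_range.1 hp) i,
    dotProduct_zero]

lemma exists_dotProduct_inv_pow_mulVec_pos {ι : Type*} {S : ι → Matrix d d ℝ} {A : Matrix d d ℝ}
    (hA : IsUnit A.det) {n : ℕ}
    (hObs : ∀ y ≠ 0, ∃ p < n, ∃ r, 0 < (A ^ p *ᵥ y) ⬝ᵥ S r *ᵥ (A ^ p *ᵥ y))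
    (k : ℕ) {x : d → ℝ} (hx : x ≠ 0) :
    ∃ u, k ≤ u ∧ u < k + n ∧ ∃ r,
      0 < (A⁻¹ ^ (u + 1) *ᵥ x) ⬝ᵥ S r *ᵥ (A⁻¹ ^ (u + 1) *ᵥ x) := by
  have hunit : IsUnit (A⁻¹ ^ (k + n)) :=
    ((isUnit_iff_isUnit_det _).2 (isUnit_nonsing_inv_det_iff.2 hA)).pow _
  obtain ⟨p, hp, r, hr⟩ := hObs _ fun h =>
    hx (mulVec_injective_of_isUnit hunit (h.trans (mulVec_zero _).symm))
  refine ⟨k + n - 1 - p, by omega, by omega, r, ?_⟩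
  have hpow : A ^ p * A⁻¹ ^ (k + n) = A⁻¹ ^ (k + n - 1 - p + 1) := by
    rw [show k + n = p + (k + n - 1 - p + 1) by omega, pow_add, ← Matrix.mul_assoc, inv_pow',
      mul_nonsing_inv _ (by rw [det_pow]; exact hA.pow p), Matrix.one_mul]
    congr 1
    omega
  rwa [mulVec_mulVec, hpow] at hr

section Primitive

variable {ι : Type*} [Fintype ι] [DecidableEq ι] {L : Matrix ι ι ℝ}

lemma IsPrimitive.exists_pos (hL : L.IsPrimitive) (i : ι) : ∃ j, 0 < L i j := by
  obtain ⟨k, hk, hpos⟩ := hL.exists_pos_pow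
  by_contra! hrow
  have hzero : ∀ j, L i j = 0 := fun j => le_antisymm (hrow j) (hL.nonneg i j)
  have := hpos i i
  rw [← Nat.succ_pred_eq_of_pos hk, pow_succ', mul_apply] at this
  simp [hzero] at this

lemma IsPrimitive.exists_forall_pow_pos (hL : L.IsPrimitive) :
    ∃ k, ∀ w ≥ k, ∀ i j, 0 < (L ^ w) i j := by
  obtain ⟨k, -, hpos⟩ := hL.exists_pos_pow
  refine ⟨k, fun w hw => ?_⟩
  induction w, hw using Nat.le_induction with
  | base => exact hpos
  | succ w _ ih =>
    intro i j
    obtain ⟨r, hr⟩ := hL.exists_pos i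
    rw [pow_succ', mul_apply]
    exact Finset.sum_pos' (fun s _ => mul_nonneg (hL.nonneg i s) (ih s j).le)
      ⟨r, Finset.mem_univ r, mul_pos hr (ih r j)⟩

end Primitive

end Matrix

section Riccati

variable {d ι : Type*} [Fintype ι] (L : Matrix ι ι ℝ) (S : ι → Matrix d d ℝ)

/-- The information fused at node `i` from the information matrices `W j` of its neighbours;
`S j` stands for the measurement information `C jᵀ R j⁻¹ C j`. -/
def fusedInfo (W : ι → Matrix d d ℝ) (i : ι) : Matrix d d ℝ :=
  ∑ j, (L i j • W j + L i j • S j)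

variable {L S}

lemma posSemidef_fusedInfo (hL : ∀ i j, 0 ≤ L i j) (hS : ∀ j, (S j).PosSemidef)
    {W : ι → Matrix d d ℝ} (hW : ∀ j, (W j).PosSemidef) (i : ι) :
    (fusedInfo L S W i).PosSemidef :=
  posSemidef_sum _ fun j _ => ((hW j).smul (hL i j)).add ((hS j).smul (hL i j))

lemma posDef_fusedInfo (hL : ∀ i j, 0 ≤ L i j) {i : ι} (hrow : ∃ j, 0 < L i j)
    (hS : ∀ j, (S j).PosSemidef) {W : ι → Matrix d d ℝ} (hW : ∀ j, (W j).PosDef) :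
    (fusedInfo L S W i).PosDef := by
  obtain ⟨j, hj⟩ := hrow
  refine ((hW j).smul hj).of_le ?_
  calc L i j • W j ≤ L i j • W j + L i j • S j :=
        le_add_of_nonneg_right ((hS j).smul (hL i j)).nonneg
    _ ≤ fusedInfo L S W i :=
        Finset.single_le_sum (f := fun j => L i j • W j + L i j • S j)
          (fun j _ => (((hW j).posSemidef.smul (hL i j)).add ((hS j).smul (hL i j))).nonneg)
          (Finset.mem_univ j)

variable [Fintype d]

lemma fusedInfo_mono (hL : ∀ i j, 0 ≤ L i j) {W W' : ι → Matrix d d ℝ} (h : ∀ j, W j ≤ W' j)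
    (i : ι) : fusedInfo L S W i ≤ fusedInfo L S W' i :=
  Finset.sum_le_sum fun j _ => add_le_add (smul_le_smul_of_nonneg_left (h j) (hL i j)) le_rfl

variable (L S) in
/-- A discounted Riccati step on information matrices `W = P⁻¹`: it bounds `(F P)⁻¹` from below
for `B = A⁻¹` and suitable `γ`. -/
def infoStep (γ : ℝ) (B : Matrix d d ℝ) (W : ι → Matrix d d ℝ) (i : ι) : Matrix d d ℝ :=
  γ • (Bᵀ * fusedInfo L S W i * B)

lemma infoStep_mono {γ : ℝ} (hγ : 0 ≤ γ) (hL : ∀ i j, 0 ≤ L i j) (B : Matrix d d ℝ)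
    {W W' : ι → Matrix d d ℝ} (h : ∀ j, W j ≤ W' j) (i : ι) :
    infoStep L S γ B W i ≤ infoStep L S γ B W' i :=
  smul_le_smul_of_nonneg_left
    (transpose_mul_mul_le_transpose_mul_mul (fusedInfo_mono hL h i) B) hγ

lemma dotProduct_infoStep_mulVec (γ : ℝ) (B : Matrix d d ℝ) (W : ι → Matrix d d ℝ) (i : ι)
    (x : d → ℝ) : x ⬝ᵥ infoStep L S γ B W i *ᵥ x =
      γ * ∑ j, L i j * ((B *ᵥ x) ⬝ᵥ W j *ᵥ (B *ᵥ x) + (B *ᵥ x) ⬝ᵥ S j *ᵥ (B *ᵥ x)) := by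
  simp only [infoStep, fusedInfo, smul_mulVec, dotProduct_smul, dotProduct_transpose_mul_mul_mulVec,
    sum_mulVec, dotProduct_sum, add_mulVec, dotProduct_add, smul_eq_mul, mul_add]

lemma posSemidef_iterate_infoStep {γ : ℝ} (hγ : 0 ≤ γ) (hL : ∀ i j, 0 ≤ L i j)
    (hS : ∀ j, (S j).PosSemidef) (B : Matrix d d ℝ) (s : ℕ) (i : ι) :
    ((infoStep L S γ B)^[s] 0 i).PosSemidef := by
  induction s generalizing i with
  | zero => exact PosSemidef.zero
  | succ s ih =>
    rw [Function.iterate_succ_apply']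
    have hBGB := (posSemidef_fusedInfo hL hS ih i).conjTranspose_mul_mul_same B
    rw [conjTranspose_eq_transpose_of_trivial] at hBGB
    exact hBGB.smul hγ

variable [DecidableEq d]

lemma le_dotProduct_iterate_infoStep_mulVec [DecidableEq ι] {γ : ℝ} (hγ : 0 ≤ γ)
    (hL : ∀ i j, 0 ≤ L i j) (hS : ∀ j, (S j).PosSemidef) (B : Matrix d d ℝ) {s u : ℕ}
    (hu : u < s) (i r : ι) (x : d → ℝ) :
    γ ^ (u + 1) * (L ^ (u + 1)) i r * ((B ^ (u + 1) *ᵥ x) ⬝ᵥ S r *ᵥ (B ^ (u + 1) *ᵥ x)) ≤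
      x ⬝ᵥ (infoStep L S γ B)^[s] 0 i *ᵥ x := by
  have hS' : ∀ j y, 0 ≤ y ⬝ᵥ S j *ᵥ y := fun j y => by
    simpa using (hS j).dotProduct_mulVec_nonneg y
  induction s generalizing u i x with
  | zero => exact absurd hu (Nat.not_lt_zero u)
  | succ s ih =>
    have hW : ∀ j y, 0 ≤ y ⬝ᵥ (infoStep L S γ B)^[s] 0 j *ᵥ y := fun j y => by
      simpa using (posSemidef_iterate_infoStep hγ hL hS B s j).dotProduct_mulVec_nonneg y
    rw [Function.iterate_succ_apply', dotProduct_infoStep_mulVec]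
    rcases u with _ | u
    · rw [zero_add, pow_one, pow_one, pow_one, mul_assoc]
      refine mul_le_mul_of_nonneg_left ?_ hγ
      calc L i r * ((B *ᵥ x) ⬝ᵥ S r *ᵥ (B *ᵥ x))
          ≤ L i r * ((B *ᵥ x) ⬝ᵥ (infoStep L S γ B)^[s] 0 r *ᵥ (B *ᵥ x) +
              (B *ᵥ x) ⬝ᵥ S r *ᵥ (B *ᵥ x)) :=
            mul_le_mul_of_nonneg_left (le_add_of_nonneg_left (hW r _)) (hL i r)
        _ ≤ _ := Finset.single_le_sum
            (f := fun j => L i j * ((B *ᵥ x) ⬝ᵥ (infoStep L S γ B)^[s] 0 j *ᵥ (B *ᵥ x) +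
              (B *ᵥ x) ⬝ᵥ S j *ᵥ (B *ᵥ x)))
            (fun j _ => mul_nonneg (hL i j) (add_nonneg (hW j _) (hS' j _))) (Finset.mem_univ r)
    · -- the information of `r` reaches `i` in `u + 2` steps through some first neighbour `j`
      have hsplit : γ ^ (u + 1 + 1) * (L ^ (u + 1 + 1)) i r *
            ((B ^ (u + 1 + 1) *ᵥ x) ⬝ᵥ S r *ᵥ (B ^ (u + 1 + 1) *ᵥ x)) =
          γ * ∑ j, L i j * (γ ^ (u + 1) * (L ^ (u + 1)) j r *
            ((B ^ (u + 1) *ᵥ (B *ᵥ x)) ⬝ᵥ S r *ᵥ (B ^ (u + 1) *ᵥ (B *ᵥ x)))) := by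
        rw [pow_succ' L (u + 1), mul_apply, pow_succ B (u + 1), ← mulVec_mulVec,
          Finset.mul_sum, Finset.sum_mul, Finset.mul_sum]
        exact Finset.sum_congr rfl fun j _ => by ring
      rw [hsplit]
      refine mul_le_mul_of_nonneg_left (Finset.sum_le_sum fun j _ =>
        mul_le_mul_of_nonneg_left ?_ (hL i j)) hγ
      exact (ih (by omega) j (B *ᵥ x)).trans (le_add_of_nonneg_right (hS' j _))

lemma posDef_iterate_infoStep [DecidableEq ι] {γ : ℝ} (hγ : 0 < γ) (hL : ∀ i j, 0 ≤ L i j)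
    (hS : ∀ j, (S j).PosSemidef) (B : Matrix d d ℝ) {s : ℕ} {i : ι}
    (h : ∀ x ≠ 0, ∃ u < s, ∃ r, 0 < (L ^ (u + 1)) i r ∧
      0 < (B ^ (u + 1) *ᵥ x) ⬝ᵥ S r *ᵥ (B ^ (u + 1) *ᵥ x)) :
    ((infoStep L S γ B)^[s] 0 i).PosDef := by
  refine .of_dotProduct_mulVec_pos (posSemidef_iterate_infoStep hγ.le hL hS B s i).isHermitian
    fun x hx => ?_
  obtain ⟨u, hu, r, hLr, hSr⟩ := h x hx
  rw [star_trivial]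
  exact lt_of_lt_of_le (by positivity)
    (le_dotProduct_iterate_infoStep_mulVec hγ.le hL hS B hu i r x)


variable (L S) (A Q : Matrix d d ℝ)

noncomputable def riccatiMap (P : ι → Matrix d d ℝ) (i : ι) : Matrix d d ℝ :=
  A * (fusedInfo L S (fun j => (P j)⁻¹) i)⁻¹ * Aᵀ + Q

noncomputable def riccatiSeq (t : ℕ) : ι → Matrix d d ℝ :=
  (riccatiMap L S A Q)^[t] fun _ => Q

variable {L S A Q}

lemma le_riccatiMap (hL : ∀ i j, 0 ≤ L i j) (hS : ∀ j, (S j).PosSemidef)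
    {P : ι → Matrix d d ℝ} (hP : ∀ j, (P j).PosSemidef) (i : ι) :
    Q ≤ riccatiMap L S A Q P i := by
  have hG := (posSemidef_fusedInfo hL hS (fun j => (hP j).inv) i).inv
  exact le_add_of_nonneg_left (by simpa using (hG.mul_mul_conjTranspose_same A).nonneg)

lemma riccatiMap_mono (hL : ∀ i j, 0 ≤ L i j) (hrow : ∀ i, ∃ j, 0 < L i j)
    (hS : ∀ j, (S j).PosSemidef) {P P' : ι → Matrix d d ℝ} (hP : ∀ j, (P j).PosDef)
    (h : ∀ j, P j ≤ P' j) (i : ι) : riccatiMap L S A Q P i ≤ riccatiMap L S A Q P' i := by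
  have hG : fusedInfo L S (fun j => (P' j)⁻¹) i ≤ fusedInfo L S (fun j => (P j)⁻¹) i :=
    fusedInfo_mono hL (fun j => (hP j).inv_anti (h j)) i
  have hG' := (posDef_fusedInfo hL (hrow i) hS fun j => ((hP j).of_le (h j)).inv).inv_anti hG
  exact add_le_add (mul_mul_transpose_le_mul_mul_transpose hG' A) le_rfl

lemma riccatiSeq_succ (t : ℕ) :
    riccatiSeq L S A Q (t + 1) = riccatiMap L S A Q (riccatiSeq L S A Q t) :=
  Function.iterate_succ_apply' _ _ _

lemma le_riccatiSeq (hL : ∀ i j, 0 ≤ L i j) (hS : ∀ j, (S j).PosSemidef) (hQ : Q.PosSemidef)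
    (t : ℕ) (i : ι) : Q ≤ riccatiSeq L S A Q t i := by
  induction t generalizing i with
  | zero => exact le_rfl
  | succ t ih =>
    rw [riccatiSeq_succ]
    exact le_riccatiMap hL hS (fun j => (hQ.nonneg.trans (ih j)).posSemidef) i

lemma monotone_riccatiSeq (hL : ∀ i j, 0 ≤ L i j) (hrow : ∀ i, ∃ j, 0 < L i j)
    (hS : ∀ j, (S j).PosSemidef) (hQ : Q.PosDef) : Monotone (riccatiSeq L S A Q) := by
  refine monotone_nat_of_le_succ fun t => ?_
  induction t with
  | zero => intro i; exact le_riccatiSeq hL hS hQ.posSemidef _ i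
  | succ t ih =>
    simp only [riccatiSeq_succ] at ih ⊢
    exact riccatiMap_mono hL hrow hS (fun j => hQ.of_le (le_riccatiSeq hL hS hQ.posSemidef t j)) ih

lemma continuousAt_riccatiMap (hL : ∀ i j, 0 ≤ L i j) (hrow : ∀ i, ∃ j, 0 < L i j)
    (hS : ∀ j, (S j).PosSemidef) {P : ι → Matrix d d ℝ} (hP : ∀ j, (P j).PosDef) (i : ι) :
    ContinuousAt (fun P' : ι → Matrix d d ℝ => riccatiMap L S A Q P' i) P := by
  have hinv : ∀ j, ContinuousAt (fun P' : ι → Matrix d d ℝ => (P' j)⁻¹) P := fun j =>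
    (hP j).continuousAt_inv.comp (x := P) (continuous_apply j).continuousAt
  have hG : ContinuousAt (fun P' : ι → Matrix d d ℝ => fusedInfo L S (fun j => (P' j)⁻¹) i) P := by
    unfold fusedInfo
    fun_prop
  have hGinv := (posDef_fusedInfo hL (hrow i) hS fun j => (hP j).inv).continuousAt_inv.comp
    (x := P) hG
  exact ((continuousAt_const.mul hGinv).mul continuousAt_const).add (continuousAt_const (x := P))

lemma exists_infoStep_le_inv_riccatiMap (hL : ∀ i j, 0 ≤ L i j) (hrow : ∀ i, ∃ j, 0 < L i j)
    (hS : ∀ j, (S j).PosSemidef) (hA : IsUnit A.det) (hQ : Q.PosDef) :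
    ∃ γ : ℝ, 0 < γ ∧ ∀ P : ι → Matrix d d ℝ, (∀ j, Q ≤ P j) →
      ∀ i, infoStep L S γ A⁻¹ (fun j => (P j)⁻¹) i ≤ (riccatiMap L S A Q P i)⁻¹ := by
  have hG₀ : ∀ i, (fusedInfo L S (fun _ => Q⁻¹) i).PosDef := fun i =>
    posDef_fusedInfo hL (hrow i) hS fun _ => hQ.inv
  obtain ⟨c, hc, hQc⟩ := exists_forall_le_smul
    (fun i => (hG₀ i).inv.mul_mul_transpose_of_isUnit hA) hQ.isHermitian
  refine ⟨(1 + c)⁻¹, by positivity, fun P hP i => ?_⟩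
  set G := fusedInfo L S (fun j => (P j)⁻¹) i
  have hG : G.PosDef := posDef_fusedInfo hL (hrow i) hS fun j => (hQ.of_le (hP j)).inv
  have hGG₀ : G ≤ fusedInfo L S (fun _ => Q⁻¹) i :=
    fusedInfo_mono hL (fun j => hQ.inv_anti (hP j)) i
  -- `Q` is dominated by a fixed multiple of `A G⁻¹ Aᵀ`, uniformly in `P`
  have hQX : Q ≤ c • (A * G⁻¹ * Aᵀ) := (hQc i).trans <| smul_le_smul_of_nonneg_left
    (mul_mul_transpose_le_mul_mul_transpose (hG.inv_anti hGG₀) A) hc.le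
  have hXinv : (A * G⁻¹ * Aᵀ)⁻¹ = (A⁻¹)ᵀ * G * A⁻¹ := by
    rw [Matrix.mul_inv_rev, Matrix.mul_inv_rev, nonsing_inv_nonsing_inv _ hG.isUnit_det,
      transpose_nonsing_inv, Matrix.mul_assoc]
  have := inv_smul_inv_le_inv_add hc.le (hG.inv.mul_mul_transpose_of_isUnit hA)
    hQ.posSemidef hQX
  rwa [hXinv] at this

lemma iterate_infoStep_le_inv_riccatiSeq (hL : ∀ i j, 0 ≤ L i j) (hS : ∀ j, (S j).PosSemidef)
    (hQ : Q.PosDef) {γ : ℝ} (hγ : 0 ≤ γ)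
    (hinfo : ∀ P : ι → Matrix d d ℝ, (∀ j, Q ≤ P j) →
      ∀ i, infoStep L S γ A⁻¹ (fun j => (P j)⁻¹) i ≤ (riccatiMap L S A Q P i)⁻¹)
    (s t : ℕ) (i : ι) :
    (infoStep L S γ A⁻¹)^[s] 0 i ≤ (riccatiSeq L S A Q (t + s) i)⁻¹ := by
  induction s generalizing i with
  | zero => exact (hQ.of_le (le_riccatiSeq hL hS hQ.posSemidef t i)).inv.posSemidef.nonneg
  | succ s ih =>
    rw [Function.iterate_succ_apply', ← add_assoc, riccatiSeq_succ]
    exact (infoStep_mono hγ hL A⁻¹ ih i).trans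
      (hinfo _ (le_riccatiSeq hL hS hQ.posSemidef _) i)

theorem exists_posDef_eq_riccatiMap [DecidableEq ι] (hL : L.IsPrimitive)
    (hS : ∀ j, (S j).PosSemidef) (hA : IsUnit A.det) (hQ : Q.PosDef) {n : ℕ}
    (hObs : ∀ y ≠ 0, ∃ p < n, ∃ r, 0 < (A ^ p *ᵥ y) ⬝ᵥ S r *ᵥ (A ^ p *ᵥ y)) :
    ∃ P : ι → Matrix d d ℝ, (∀ i, (P i).PosDef) ∧ ∀ i, P i = riccatiMap L S A Q P i := by
  have hrow := hL.exists_pos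
  obtain ⟨k, hk⟩ := hL.exists_forall_pow_pos
  obtain ⟨γ, hγ, hinfo⟩ := exists_infoStep_le_inv_riccatiMap hL.nonneg hrow hS hA hQ
  have hΦ : ∀ i, ((infoStep L S γ A⁻¹)^[k + n] 0 i).PosDef := fun i =>
    posDef_iterate_infoStep hγ hL.nonneg hS A⁻¹ fun x hx => by
      obtain ⟨u, hku, hun, r, hr⟩ := exists_dotProduct_inv_pow_mulVec_pos hA hObs k hx
      exact ⟨u, hun, r, hk _ (by omega) i r, hr⟩
  have hmono := monotone_riccatiSeq (A := A) hL.nonneg hrow hS hQ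
  have hbdd : ∀ i t, riccatiSeq L S A Q t i ≤ ((infoStep L S γ A⁻¹)^[k + n] 0 i)⁻¹ := by
    intro i t
    have hle := (hΦ i).inv_anti
      (iterate_infoStep_le_inv_riccatiSeq hL.nonneg hS hQ hγ.le hinfo (k + n) t i)
    rw [nonsing_inv_nonsing_inv _
      (hQ.of_le (le_riccatiSeq hL.nonneg hS hQ.posSemidef _ i)).isUnit_det] at hle
    exact (hmono (Nat.le_add_right t (k + n)) i).trans hle
  choose P hP using fun i => exists_tendsto_of_monotone (fun s t hst => hmono hst i)
    ⟨_, Set.forall_mem_range.2 (hbdd i)⟩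
  have hPpd : ∀ i, (P i).PosDef := fun i =>
    hQ.of_le (Monotone.ge_of_tendsto (fun s t hst => hmono hst i) (hP i) 0)
  refine ⟨P, hPpd, fun i => tendsto_nhds_unique ((hP i).comp (tendsto_add_atTop_nat 1)) ?_⟩
  simp only [Function.comp_def, riccatiSeq_succ]
  exact (continuousAt_riccatiMap hL.nonneg hrow hS hPpd i).tendsto.comp (tendsto_pi_nhds.2 hP)

end Riccati

theorem hcre_exists_solution_general
    (n N : ℕ)
    (m : Fin N → ℕ)
    (A : Matrix (Fin n) (Fin n) ℝ) (hA : IsUnit A.det)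
    (C : ∀ i : Fin N, Matrix (Fin (m i)) (Fin n) ℝ)
    (hObs : (∑ k ∈ Finset.range n, (A ^ k)ᵀ * (∑ i, (C i)ᵀ * C i) * A ^ k).PosDef)
    (Q : Matrix (Fin n) (Fin n) ℝ) (hQ : Q.PosDef)
    (R : ∀ i : Fin N, Matrix (Fin (m i)) (Fin (m i)) ℝ) (hR : ∀ i, (R i).PosDef)
    (L : Matrix (Fin N) (Fin N) ℝ)
    (hLnonneg : ∀ i j, 0 ≤ L i j)
    (hLprim : ∃ k : ℕ, 0 < k ∧ ∀ i j, 0 < (L ^ k) i j) :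
    ∃ P : Fin N → Matrix (Fin n) (Fin n) ℝ,
      (∀ i, (P i).PosDef) ∧
      (∀ i, P i =
        A * (∑ j, (L i j • (P j)⁻¹ + L i j • ((C j)ᵀ * (R j)⁻¹ * C j)))⁻¹ * Aᵀ + Q) := by
  have hS : ∀ j, ((C j)ᵀ * (R j)⁻¹ * C j).PosSemidef := fun j => by
    simpa using (hR j).inv.posSemidef.conjTranspose_mul_mul_same (C j)
  refine exists_posDef_eq_riccatiMap ⟨hLnonneg, hLprim⟩ hS hA hQ (n := n) fun y hy => ?_
  obtain ⟨p, hp, i, hCi⟩ := exists_mulVec_ne_zero_of_posDef_gramian hObs hy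
  refine ⟨p, hp, i, ?_⟩
  rw [dotProduct_transpose_mul_mul_mulVec]
  simpa using (hR i).inv.dotProduct_mulVec_pos hCi

/-- Existence of at least one group of positive definite solutions
to the harmonic-coupled Riccati equations. -/
theorem hcre_exists_solution
    (n N : ℕ) (hn : 0 < n) (hN : 0 < N)
    (m : Fin N → ℕ) (hm : ∀ i, 0 < m i)
    (A : Matrix (Fin n) (Fin n) ℝ) (hA : IsUnit A.det)
    (C : ∀ i : Fin N, Matrix (Fin (m i)) (Fin n) ℝ)
    (hObs : (∑ k ∈ Finset.range n, (A ^ k)ᵀ * (∑ i, (C i)ᵀ * C i) * A ^ k).PosDef)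
    (Q : Matrix (Fin n) (Fin n) ℝ) (hQ : Q.PosDef)
    (R : ∀ i : Fin N, Matrix (Fin (m i)) (Fin (m i)) ℝ) (hR : ∀ i, (R i).PosDef)
    (L : Matrix (Fin N) (Fin N) ℝ)
    (hLnonneg : ∀ i j, 0 ≤ L i j) (hLrow : ∀ i, ∑ j, L i j = 1)
    (hLprim : ∃ k : ℕ, 0 < k ∧ ∀ i j, 0 < (L ^ k) i j) :
    ∃ P : Fin N → Matrix (Fin n) (Fin n) ℝ,
      (∀ i, (P i).PosDef) ∧
      (∀ i, P i =
        A * (∑ j, (L i j • (P j)⁻¹ + L i j • ((C j)ᵀ * (R j)⁻¹ * C j)))⁻¹ * Aᵀ + Q) :=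
  hcre_exists_solution_general n N m A hA C hObs Q hQ R hR L hLnonneg hLprim
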